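/- arXiv:2406.14950 — 2 statements merged into one kernel-verified Lean document; each statement's English description precedes it below -/
import Mathlib

section
/- Let n ≥ 1, Q = [0,1)ⁿ, ξ ∈ ℝⁿ, and 0 < t < l. There is a constant C(n) > 0, depending only on n, such that for every u ∈ L¹(lQ + ξ) one has ∫_{lQ+ξ} |u(y) − l^{−n} ∫_{lQ+ξ} u(x) dx| dy ≤ C(n) · l · ∫_{lQ+ξ} ∫_{lQ+ξ} |u(x) − u(y)| / (|x−y|² + t²)^{(n+1)/2} dx dy. -/
open MeasureTheory Filter Set

/-- The half-open cube `lQ + ξ` with `Q = [0,1)ⁿ`. -/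
def cube (n : ℕ) (l : ℝ) (ξ : EuclideanSpace ℝ (Fin n)) : Set (EuclideanSpace ℝ (Fin n)) :=
  {x | ∀ i, x i ∈ Set.Ico (ξ i) (ξ i + l)}

/-!
Since `t < l`, on `(lQ + ξ)²` the kernel `(|x - y|² + t²)^(-(n+1)/2)` is bounded below by
`(n + 1)^(-(n+1)/2) l^(-(n+1))`, because `|x - y|² ≤ n l²`. So with `C = (n + 1)^((n+1)/2)` the
right-hand side dominates `l^(-n) ∫∫ |u x - u y|`, and this controls the mean oscillation, since
`|u y - ⨍ u| ≤ ⨍ |u y - u x| dx`.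
-/

section MeanOscillation

variable {α : Type*} [MeasurableSpace α] (μ : Measure α) [IsFiniteMeasure μ] {u : α → ℝ}

theorem integrable_abs_sub_prod (hu : Integrable u μ) :
    Integrable (fun p : α × α => |u p.1 - u p.2|) (μ.prod μ) :=
  ((hu.comp_fst μ).sub (hu.comp_snd μ)).abs

theorem abs_sub_average_le [NeZero μ] (hu : Integrable u μ) (y : α) :
    |u y - (μ.real univ)⁻¹ * ∫ x, u x ∂μ| ≤ (μ.real univ)⁻¹ * ∫ x, |u y - u x| ∂μ := by
  have hV : 0 < μ.real univ := measureReal_univ_pos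
  have hsub : u y - (μ.real univ)⁻¹ * ∫ x, u x ∂μ = (μ.real univ)⁻¹ * ∫ x, (u y - u x) ∂μ := by
    rw [integral_sub (integrable_const _) hu, integral_const, smul_eq_mul]
    field_simp
  rw [hsub, abs_mul, abs_of_pos (inv_pos.mpr hV)]
  gcongr
  exact abs_integral_le_integral_abs

theorem integral_abs_sub_average_le (hu : Integrable u μ) :
    ∫ y, |u y - (μ.real univ)⁻¹ * ∫ x, u x ∂μ| ∂μ ≤
      (μ.real univ)⁻¹ * ∫ y, ∫ x, |u y - u x| ∂μ ∂μ := by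
  rcases eq_zero_or_neZero μ with rfl | _
  · simp
  refine (integral_mono_of_nonneg (Eventually.of_forall fun _ => abs_nonneg _)
    ((integrable_abs_sub_prod μ hu).integral_prod_left.const_mul _)
    (Eventually.of_forall (abs_sub_average_le μ hu))).trans_eq (integral_const_mul _ _)

end MeanOscillation

theorem integral_integral_mono_ae {α β : Type*} [MeasurableSpace α] [MeasurableSpace β]
    {μ : Measure α} {ν : Measure β} [SFinite μ] [SFinite ν] {f g : α → β → ℝ}
    (hf : Integrable (Function.uncurry f) (μ.prod ν))
    (hg : Integrable (Function.uncurry g) (μ.prod ν))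
    (hfg : ∀ᵐ p ∂μ.prod ν, f p.1 p.2 ≤ g p.1 p.2) :
    ∫ x, ∫ y, f x y ∂ν ∂μ ≤ ∫ x, ∫ y, g x y ∂ν ∂μ := by
  rw [integral_integral hf, integral_integral hg]
  exact integral_mono_ae hf hg hfg

theorem integrable_abs_sub_div_rpow {E : Type*} [NormedAddCommGroup E] [MeasurableSpace E]
    [BorelSpace E] [SecondCountableTopology E] (μ : Measure E) [IsFiniteMeasure μ]
    {u : E → ℝ} (hu : Integrable u μ) {t s : ℝ} (ht : t ≠ 0) (hs : 0 ≤ s) :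
    Integrable (fun p : E × E => |u p.1 - u p.2| / (‖p.1 - p.2‖ ^ 2 + t ^ 2) ^ s)
      (μ.prod μ) := by
  have hpos : ∀ r : ℝ, 0 < (r ^ 2 + t ^ 2) ^ s := fun r => by positivity
  have hcont : Continuous fun p : E × E => (‖p.1 - p.2‖ ^ 2 + t ^ 2) ^ s :=
    (((continuous_fst.sub continuous_snd).norm.pow 2).add continuous_const).rpow_const
      fun _ => Or.inr hs
  refine ((integrable_abs_sub_prod μ hu).const_mul ((t ^ 2) ^ s)⁻¹).mono'
    ((integrable_abs_sub_prod μ hu).aestronglyMeasurable.div₀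
      hcont.aestronglyMeasurable) (Eventually.of_forall fun p => ?_)
  have hD : (t ^ 2) ^ s ≤ (‖p.1 - p.2‖ ^ 2 + t ^ 2) ^ s :=
    Real.rpow_le_rpow (by positivity) (by nlinarith [sq_nonneg ‖p.1 - p.2‖]) hs
  rw [Real.norm_of_nonneg (div_nonneg (abs_nonneg _) (hpos _).le), div_eq_inv_mul]
  gcongr

section Cube

variable {n : ℕ} {l : ℝ} {ξ : EuclideanSpace ℝ (Fin n)}

theorem cube_eq_preimage :
    cube n l ξ = (MeasurableEquiv.toLp 2 (Fin n → ℝ)).symm ⁻¹'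
      (univ.pi fun i => Ico (ξ i) (ξ i + l)) := by
  ext x
  simp [cube, Set.mem_pi]

theorem measurableSet_cube : MeasurableSet (cube n l ξ) := by
  rw [cube_eq_preimage]
  exact (MeasurableSet.univ_pi fun _ => measurableSet_Ico).preimage
    (MeasurableEquiv.toLp 2 (Fin n → ℝ)).symm.measurable

theorem volume_cube (hl : 0 ≤ l) : volume (cube n l ξ) = ENNReal.ofReal (l ^ n) := by
  rw [cube_eq_preimage,
    (EuclideanSpace.volume_preserving_symm_measurableEquiv_toLp (Fin n)).measure_preimage
      (MeasurableSet.univ_pi fun _ => measurableSet_Ico).nullMeasurableSet, volume_pi_pi]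
  simp [Real.volume_Ico, ← ENNReal.ofReal_pow hl]

theorem volume_real_cube (hl : 0 ≤ l) : volume.real (cube n l ξ) = l ^ n := by
  rw [measureReal_def, volume_cube hl, ENNReal.toReal_ofReal (by positivity)]

theorem norm_sub_sq_le_of_mem_cube {x y : EuclideanSpace ℝ (Fin n)}
    (hx : x ∈ cube n l ξ) (hy : y ∈ cube n l ξ) : ‖x - y‖ ^ 2 ≤ n * l ^ 2 := by
  rw [EuclideanSpace.real_norm_sq_eq]
  calc ∑ i, (x - y) i ^ 2 ≤ ∑ _i : Fin n, l ^ 2 := Finset.sum_le_sum fun i _ => by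
        obtain ⟨hxi, hxi'⟩ := hx i
        obtain ⟨hyi, hyi'⟩ := hy i
        rw [PiLp.sub_apply]
        nlinarith
    _ = n * l ^ 2 := by simp

theorem rpow_kernel_denom_le_of_mem_cube {x y : EuclideanSpace ℝ (Fin n)}
    (hx : x ∈ cube n l ξ) (hy : y ∈ cube n l ξ) {t : ℝ} (ht : 0 ≤ t) (htl : t ≤ l) :
    (‖x - y‖ ^ 2 + t ^ 2) ^ (((n : ℝ) + 1) / 2) ≤
      ((n : ℝ) + 1) ^ (((n : ℝ) + 1) / 2) * l ^ (n + 1) := by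
  have hl : 0 ≤ l := ht.trans htl
  have hl2 : (l ^ 2) ^ (((n : ℝ) + 1) / 2) = l ^ (n + 1) := by
    rw [← Real.rpow_natCast l 2, ← Real.rpow_mul hl, ← Real.rpow_natCast l (n + 1)]
    push_cast
    ring_nf
  have ht2 : t ^ 2 ≤ l ^ 2 := pow_le_pow_left₀ ht htl 2
  calc (‖x - y‖ ^ 2 + t ^ 2) ^ (((n : ℝ) + 1) / 2)
      ≤ (((n : ℝ) + 1) * l ^ 2) ^ (((n : ℝ) + 1) / 2) := by
        gcongr
        linarith [norm_sub_sq_le_of_mem_cube hx hy]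
    _ = ((n : ℝ) + 1) ^ (((n : ℝ) + 1) / 2) * l ^ (n + 1) := by
        rw [Real.mul_rpow (by positivity) (by positivity), hl2]

theorem ae_le_kernel_on_cube (u : EuclideanSpace ℝ (Fin n) → ℝ) {t : ℝ} (ht : 0 < t)
    (htl : t ≤ l) :
    ∀ᵐ p ∂(volume.restrict (cube n l ξ)).prod (volume.restrict (cube n l ξ)),
      (((n : ℝ) + 1) ^ (((n : ℝ) + 1) / 2) * l ^ (n + 1))⁻¹ * |u p.1 - u p.2| ≤
        |u p.1 - u p.2| / (‖p.1 - p.2‖ ^ 2 + t ^ 2) ^ (((n : ℝ) + 1) / 2) := by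
  have hl : 0 < l := ht.trans_le htl
  rw [Measure.prod_restrict]
  filter_upwards [ae_restrict_mem (measurableSet_cube.prod measurableSet_cube)] with p hp
  rw [inv_mul_eq_div]
  exact div_le_div_of_nonneg_left (abs_nonneg _) (by positivity)
    (rpow_kernel_denom_le_of_mem_cube hp.1 hp.2 ht.le htl)

end Cube

theorem stmt_3_general (n : ℕ) :
    ∃ C : ℝ, 0 < C ∧
      ∀ (ξ : EuclideanSpace ℝ (Fin n)) (t l : ℝ), 0 < t → t < l →
        ∀ u : EuclideanSpace ℝ (Fin n) → ℝ, IntegrableOn u (cube n l ξ) →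
          (∫ y in cube n l ξ, |u y - (l ^ n)⁻¹ * ∫ x in cube n l ξ, u x|) ≤
            C * l * ∫ x in cube n l ξ, ∫ y in cube n l ξ,
              |u x - u y| / (‖x - y‖ ^ 2 + t ^ 2) ^ (((n : ℝ) + 1) / 2) := by
  set C : ℝ := ((n : ℝ) + 1) ^ (((n : ℝ) + 1) / 2)
  refine ⟨C, by positivity, fun ξ t l ht htl u hu => ?_⟩
  have hl : 0 < l := ht.trans htl
  have : IsFiniteMeasure (volume.restrict (cube n l ξ)) :=
    isFiniteMeasure_restrict.mpr (by simp [volume_cube hl.le])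
  have hV : (volume.restrict (cube n l ξ)).real univ = l ^ n := by
    rw [measureReal_restrict_apply_univ, volume_real_cube hl.le]
  have hscale : (l ^ n)⁻¹ = C * l * (C * l ^ (n + 1))⁻¹ := by
    have : C ≠ 0 := by positivity
    field_simp
    ring
  calc (∫ y in cube n l ξ, |u y - (l ^ n)⁻¹ * ∫ x in cube n l ξ, u x|)
      ≤ (l ^ n)⁻¹ * ∫ x in cube n l ξ, ∫ y in cube n l ξ, |u x - u y| := by
        simpa only [hV] using integral_abs_sub_average_le _ hu
    _ = C * l * ∫ x in cube n l ξ, ∫ y in cube n l ξ, (C * l ^ (n + 1))⁻¹ * |u x - u y| := by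
        simp only [integral_const_mul, hscale, mul_assoc]
    _ ≤ _ := mul_le_mul_of_nonneg_left
        (integral_integral_mono_ae (f := fun x y => (C * l ^ (n + 1))⁻¹ * |u x - u y|)
          (g := fun x y => |u x - u y| / (‖x - y‖ ^ 2 + t ^ 2) ^ (((n : ℝ) + 1) / 2))
          ((integrable_abs_sub_prod _ hu).const_mul _)
          (integrable_abs_sub_div_rpow _ hu ht.ne' (by positivity))
          (ae_le_kernel_on_cube u ht htl.le)) (by positivity)

theorem stmt_3 (n : ℕ) (hn : 1 ≤ n) :
    ∃ C : ℝ, 0 < C ∧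
      ∀ (ξ : EuclideanSpace ℝ (Fin n)) (t l : ℝ), 0 < t → t < l →
        ∀ u : EuclideanSpace ℝ (Fin n) → ℝ, IntegrableOn u (cube n l ξ) →
          (∫ y in cube n l ξ, |u y - (l ^ n)⁻¹ * ∫ x in cube n l ξ, u x|) ≤
            C * l * ∫ x in cube n l ξ, ∫ y in cube n l ξ,
              |u x - u y| / (‖x - y‖ ^ 2 + t ^ 2) ^ (((n : ℝ) + 1) / 2) :=
  stmt_3_general n
end

section
/- Let n ≥ 1 and let ρ : ℝⁿ → [0, ∞) be a bounded function supported in the unit ball B(0,1); for ε > 0 set ρ_ε(z) = ε^{−n} ρ(z/ε). Then there is a constant C > 0, depending only on n and ‖ρ‖_∞, such that for every t ∈ (0,1) and every I ∈ ℕ with 2^{−I−1} ≤ t ≤ 2^{−I}, one has Σ_{i=0}^{I} 2^{i} ρ_{2^{−i}}(z) ≤ C / (|z|² + t²)^{(n+1)/2} for every z ∈ ℝⁿ. -/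
open MeasureTheory Filter Set

/-- The rescaling `ρ_ε(z) = ε^{-n} ρ(z/ε)` of a mollifier. -/
noncomputable def rescale (n : ℕ) (ρ : EuclideanSpace ℝ (Fin n) → ℝ) (ε : ℝ)
    (z : EuclideanSpace ℝ (Fin n)) : ℝ :=
  (ε ^ n)⁻¹ * ρ (ε⁻¹ • z)

/-!
With `m = max ‖z‖ t`, the `i`-th term equals `2^{i(n+1)} ρ(2^i z)`, which vanishes unless
`2^i ‖z‖ < 1`; since also `2^i t ≤ 2^I t ≤ 1`, only indices with `2^i ≤ m⁻¹` contribute. Those terms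
form part of a geometric series of ratio `2^{n+1} ≥ 2`, which is dominated by twice its largest
term, so the sum is at most `2 ‖ρ‖_∞ m^{-(n+1)}`; finally `(‖z‖² + t²)^{(n+1)/2} ≤ (2m)^{n+1}`.
-/

open Finset

lemma geom_sum_le_two_mul_pow {R : Type*} [Semiring R] [PartialOrder R] [IsOrderedRing R]
    {q : R} (hq : 2 ≤ q) (K : ℕ) : ∑ i ∈ range (K + 1), q ^ i ≤ 2 * q ^ K := by
  induction K with
  | zero => simp [one_le_two]
  | succ K ih =>
    have hq0 : 0 ≤ q := zero_le_two.trans hq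
    calc ∑ i ∈ range (K + 2), q ^ i = ∑ i ∈ range (K + 1), q ^ i + q ^ (K + 1) :=
          sum_range_succ _ _
      _ ≤ 2 * q ^ K + q ^ (K + 1) := by gcongr
      _ ≤ q * q ^ K + q ^ (K + 1) := by gcongr
      _ = 2 * q ^ (K + 1) := by rw [two_mul, pow_succ' q K]

lemma sum_pow_le_two_mul {R : Type*} [Semiring R] [PartialOrder R] [IsOrderedRing R]
    {q M : R} (hq : 2 ≤ q) (hM : 0 ≤ M) {s : Finset ℕ} (hs : ∀ i ∈ s, q ^ i ≤ M) :
    ∑ i ∈ s, q ^ i ≤ 2 * M := by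
  rcases s.eq_empty_or_nonempty with rfl | hne
  · simpa using mul_nonneg zero_le_two hM
  have hq0 : 0 ≤ q := zero_le_two.trans hq
  calc ∑ i ∈ s, q ^ i ≤ ∑ i ∈ range (s.max' hne + 1), q ^ i :=
        sum_le_sum_of_subset_of_nonneg
          (fun i hi => mem_range.2 (Nat.lt_succ_of_le (s.le_max' i hi)))
          (fun _ _ _ => pow_nonneg hq0 _)
    _ ≤ 2 * q ^ s.max' hne := geom_sum_le_two_mul_pow hq _
    _ ≤ 2 * M := mul_le_mul_of_nonneg_left (hs _ (s.max'_mem hne)) zero_le_two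

lemma rescale_inv (n : ℕ) (ρ : EuclideanSpace ℝ (Fin n) → ℝ) (ε : ℝ)
    (z : EuclideanSpace ℝ (Fin n)) : rescale n ρ ε⁻¹ z = ε ^ n * ρ (ε • z) := by
  simp [rescale]

lemma two_rpow_neg_natCast (i : ℕ) : (2 : ℝ) ^ (-(i : ℝ)) = ((2 : ℝ) ^ i)⁻¹ := by
  rw [Real.rpow_neg zero_le_two, Real.rpow_natCast]

lemma two_pow_mul_rescale_two_rpow_neg (n : ℕ) (ρ : EuclideanSpace ℝ (Fin n) → ℝ) (i : ℕ)
    (z : EuclideanSpace ℝ (Fin n)) :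
    (2 : ℝ) ^ i * rescale n ρ ((2 : ℝ) ^ (-(i : ℝ))) z = (2 ^ (n + 1)) ^ i * ρ ((2 : ℝ) ^ i • z) := by
  rw [two_rpow_neg_natCast, rescale_inv]
  ring

lemma sum_two_pow_mul_rescale_le {n : ℕ} {ρ : EuclideanSpace ℝ (Fin n) → ℝ} {B t : ℝ}
    (hB : 0 ≤ B) (hρB : ∀ z, ρ z ≤ B)
    (hsupp : ∀ z, z ∉ Metric.ball (0 : EuclideanSpace ℝ (Fin n)) 1 → ρ z = 0)
    (ht : 0 < t) {I : ℕ} (htI : t ≤ (2 : ℝ) ^ (-(I : ℝ))) (z : EuclideanSpace ℝ (Fin n)) :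
    ∑ i ∈ range (I + 1), (2 : ℝ) ^ i * rescale n ρ ((2 : ℝ) ^ (-(i : ℝ))) z ≤
      2 * B * (max ‖z‖ t)⁻¹ ^ (n + 1) := by
  simp_rw [two_pow_mul_rescale_two_rpow_neg]
  set m := max ‖z‖ t
  have hm : 0 < m := ht.trans_le (le_max_right _ _)
  have hscale : ∀ i ∈ range (I + 1), ρ ((2 : ℝ) ^ i • z) ≠ 0 →
      ((2 : ℝ) ^ (n + 1)) ^ i ≤ m⁻¹ ^ (n + 1) := by
    intro i hi hρi
    have hz : (2 : ℝ) ^ i * ‖z‖ < 1 := by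
      by_contra h
      refine hρi (hsupp _ ?_)
      rw [mem_ball_zero_iff, norm_smul, Real.norm_of_nonneg (by positivity)]
      exact h
    have ht' : (2 : ℝ) ^ i * t ≤ 1 := by
      rw [two_rpow_neg_natCast, ← one_div, le_div_iff₀ (by positivity)] at htI
      calc (2 : ℝ) ^ i * t ≤ 2 ^ I * t := by
            gcongr
            · exact one_le_two
            · exact Nat.lt_succ_iff.mp (mem_range.mp hi)
        _ = t * 2 ^ I := mul_comm _ _
        _ ≤ 1 := htI
    have h2m : (2 : ℝ) ^ i ≤ m⁻¹ := by
      rw [← one_div, le_div_iff₀ hm, mul_max_of_nonneg _ _ (by positivity)]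
      exact max_le hz.le ht'
    rw [← pow_mul, mul_comm, pow_mul]
    gcongr
  rw [← sum_filter_ne_zero, mul_right_comm]
  refine (sum_le_sum fun i _ => mul_le_mul_of_nonneg_left (hρB _) (by positivity)).trans ?_
  rw [← sum_mul]
  gcongr
  refine sum_pow_le_two_mul (le_self_pow₀ one_le_two (Nat.succ_ne_zero n)) (by positivity)
    fun i hi => ?_
  rw [mem_filter] at hi
  exact hscale i hi.1 (right_ne_zero_of_mul hi.2)

lemma sq_add_sq_rpow_le_two_mul_max_pow {a b : ℝ} (ha : 0 ≤ a) (hb : 0 ≤ b) (k : ℕ) :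
    (a ^ 2 + b ^ 2) ^ ((k : ℝ) / 2) ≤ (2 * max a b) ^ k := by
  have hab : a ^ 2 + b ^ 2 ≤ (2 * max a b) ^ 2 := by
    have := le_max_left a b
    have := le_max_right a b
    nlinarith
  calc (a ^ 2 + b ^ 2) ^ ((k : ℝ) / 2) ≤ ((2 * max a b) ^ 2) ^ ((k : ℝ) / 2) := by gcongr
    _ = (2 * max a b) ^ k := by
      rw [← Real.rpow_natCast _ 2, ← Real.rpow_mul (by positivity), Nat.cast_ofNat,
        mul_div_cancel₀ _ two_ne_zero, Real.rpow_natCast]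

theorem stmt_6_general (n : ℕ) (B : ℝ) :
    ∃ C > (0 : ℝ), ∀ ρ : EuclideanSpace ℝ (Fin n) → ℝ,
      (∀ z, 0 ≤ ρ z) → (∀ z, ρ z ≤ B) →
      (∀ z, z ∉ Metric.ball (0 : EuclideanSpace ℝ (Fin n)) 1 → ρ z = 0) →
      ∀ t ∈ Set.Ioo (0 : ℝ) 1, ∀ I : ℕ,
        (2 : ℝ) ^ (-(I : ℝ) - 1) ≤ t → t ≤ (2 : ℝ) ^ (-(I : ℝ)) →
        ∀ z : EuclideanSpace ℝ (Fin n),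
          ∑ i ∈ Finset.range (I + 1), (2 : ℝ) ^ i * rescale n ρ ((2 : ℝ) ^ (-(i : ℝ))) z ≤
            C / (‖z‖ ^ 2 + t ^ 2) ^ (((n : ℝ) + 1) / 2) := by
  refine ⟨2 ^ (n + 2) * max B 1, by positivity, ?_⟩
  intro ρ _ hρB hsupp t ht I _ htI z
  have hm : 0 < max ‖z‖ t := ht.1.trans_le (le_max_right _ _)
  have hdenom : (‖z‖ ^ 2 + t ^ 2) ^ (((n : ℝ) + 1) / 2) ≤ (2 * max ‖z‖ t) ^ (n + 1) := by
    exact_mod_cast sq_add_sq_rpow_le_two_mul_max_pow (norm_nonneg z) ht.1.le (n + 1)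
  calc _ ≤ 2 * max B 1 * (max ‖z‖ t)⁻¹ ^ (n + 1) :=
        sum_two_pow_mul_rescale_le (by positivity) (fun z => (hρB z).trans (le_max_left B 1))
          hsupp ht.1 htI z
    _ = 2 ^ (n + 2) * max B 1 / (2 * max ‖z‖ t) ^ (n + 1) := by
        rw [inv_pow, mul_pow, pow_succ 2 (n + 1)]
        field_simp
    _ ≤ _ := by
        gcongr
        exact Real.rpow_pos_of_pos (by have := ht.1; positivity) _

theorem stmt_6 (n : ℕ) (hn : 1 ≤ n) (B : ℝ) :
    ∃ C > (0 : ℝ), ∀ ρ : EuclideanSpace ℝ (Fin n) → ℝ,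
      (∀ z, 0 ≤ ρ z) → (∀ z, ρ z ≤ B) →
      (∀ z, z ∉ Metric.ball (0 : EuclideanSpace ℝ (Fin n)) 1 → ρ z = 0) →
      ∀ t ∈ Set.Ioo (0 : ℝ) 1, ∀ I : ℕ,
        (2 : ℝ) ^ (-(I : ℝ) - 1) ≤ t → t ≤ (2 : ℝ) ^ (-(I : ℝ)) →
        ∀ z : EuclideanSpace ℝ (Fin n),
          ∑ i ∈ Finset.range (I + 1), (2 : ℝ) ^ i * rescale n ρ ((2 : ℝ) ^ (-(i : ℝ))) z ≤
            C / (‖z‖ ^ 2 + t ^ 2) ^ (((n : ℝ) + 1) / 2) :=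
  stmt_6_general n B
end
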